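/- Li–Yau gradient estimate with negative curvature: Let G=(V,E) be a finite weighted graph satisfying the exponential curvature dimension inequality CDE(n,−K) with K ≥ 0, and let u be a positive solution of ∂_t u = Δu on G. Let a satisfy assumptions (A1)–(A2), and define α(t) = 1 + (2K/a(t))∫₀ᵗ a(s)ds and φ(t) = nK + (nK²/a(t))∫₀ᵗ a(s)ds + (n/(4a(t)))∫₀ᵗ a'²/a ds. Then for all t>0 and x∈V: Γ(√u)/u − α(t)·∂_t(√u)/√u ≤ φ(t)/2. -/

import Mathlib

open Real Finset MeasureTheory

variable {V : Type*}

/-- The μ-Laplacian of a weighted graph. -/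
noncomputable def lapl (N : V → Finset V) (w : V → V → ℝ) (μ : V → ℝ)
    (f : V → ℝ) (x : V) : ℝ :=
  (1 / μ x) * ∑ y ∈ N x, w x y * (f y - f x)

/-- The carré du champ operator Γ. -/
noncomputable def gam (N : V → Finset V) (w : V → V → ℝ) (μ : V → ℝ)
    (f g : V → ℝ) (x : V) : ℝ :=
  (1 / (2 * μ x)) * ∑ y ∈ N x, w x y * (f y - f x) * (g y - g x)

/-- The weighted degree. -/
noncomputable def deg (N : V → Finset V) (w : V → V → ℝ) (x : V) : ℝ :=
  ∑ y ∈ N x, w x y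

/-- The operator Γ̃₂ of Bauer et al. -/
noncomputable def gam2 (N : V → Finset V) (w : V → V → ℝ) (μ : V → ℝ)
    (f : V → ℝ) (x : V) : ℝ :=
  (1 / 2) * lapl N w μ (gam N w μ f f) x
    - gam N w μ f (fun y => lapl N w μ (fun z => f z ^ 2) y / (2 * f y)) x

/- ## Auxiliary lemmas -/

lemma deriv_nonneg_at_max {f : ℝ → ℝ} {f' a c : ℝ} (hac : a < c)
    (hd : HasDerivAt f f' c) (hmax : ∀ t ∈ Set.Icc a c, f t ≤ f c) : 0 ≤ f' := by
  have h := hasDerivAt_iff_tendsto_slope.1 hd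
  have h2 : Filter.Tendsto (slope f c) (nhdsWithin c (Set.Iio c)) (nhds f') :=
    h.mono_left (nhdsWithin_mono _ (by intro x hx; simp at hx ⊢; exact ne_of_lt hx))
  refine ge_of_tendsto h2 ?_
  filter_upwards [Ioo_mem_nhdsLT_of_mem ⟨hac, le_refl c⟩] with t ht
  have h1 : f t ≤ f c := hmax t ⟨le_of_lt ht.1, le_of_lt ht.2⟩
  have h3 : t - c < 0 := by linarith [ht.2]
  rw [slope_def_field, div_nonneg_iff]
  right
  constructor <;> linarith

lemma lapl_lin (N : V → Finset V) (w : V → V → ℝ) (μ : V → ℝ)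
    (c₁ c₂ c₃ : ℝ) (f g h : V → ℝ) (x : V) :
    lapl N w μ (fun y => c₁ * f y + c₂ * g y + c₃ * h y) x
      = c₁ * lapl N w μ f x + c₂ * lapl N w μ g x + c₃ * lapl N w μ h x := by
  simp only [lapl]
  rw [Finset.sum_congr rfl (fun y _ => show
    w x y * ((c₁ * f y + c₂ * g y + c₃ * h y) - (c₁ * f x + c₂ * g x + c₃ * h x))
      = c₁ * (w x y * (f y - f x)) + (c₂ * (w x y * (g y - g x))
        + c₃ * (w x y * (h y - h x))) by ring)]
  rw [Finset.sum_add_distrib, Finset.sum_add_distrib,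
    ← Finset.mul_sum, ← Finset.mul_sum, ← Finset.mul_sum]
  ring

lemma lapl_sq (N : V → Finset V) (w : V → V → ℝ) (μ : V → ℝ)
    (f : V → ℝ) (x : V) (hμx : μ x ≠ 0) :
    lapl N w μ (fun y => f y ^ 2) x
      = 2 * f x * lapl N w μ f x + 2 * gam N w μ f f x := by
  simp only [lapl, gam]
  rw [Finset.sum_congr rfl (fun y _ => show
    w x y * (f y ^ 2 - f x ^ 2)
      = w x y * (f y - f x) * (f y - f x) + 2 * f x * (w x y * (f y - f x)) by ring)]
  rw [Finset.sum_add_distrib, ← Finset.mul_sum]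
  field_simp
  ring

lemma gam_nonneg (N : V → Finset V) (w : V → V → ℝ) (μ : V → ℝ)
    (f : V → ℝ) (x : V) (hμ : 0 < μ x) (hw : ∀ y ∈ N x, 0 ≤ w x y) :
    0 ≤ gam N w μ f f x := by
  unfold gam
  apply mul_nonneg (by positivity)
  exact Finset.sum_nonneg fun y hy => by nlinarith [hw y hy, sq_nonneg (f y - f x)]

lemma lapl_mul_le (N : V → Finset V) (w : V → V → ℝ) (μ : V → ℝ)
    (u Q : V → ℝ) (x : V) (hμ : 0 < μ x) (hw : ∀ y ∈ N x, 0 ≤ w x y)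
    (hu : ∀ y, 0 < u y) (hQ : ∀ y, Q y ≤ Q x) :
    lapl N w μ (fun y => u y * Q y) x ≤ Q x * lapl N w μ u x := by
  unfold lapl
  rw [mul_comm (Q x), mul_assoc]
  apply mul_le_mul_of_nonneg_left _ (by positivity)
  rw [Finset.sum_mul]
  apply Finset.sum_le_sum
  intro y hy
  have h1 := hw y hy
  have h2 := hQ y
  have h3 := (hu y).le
  show w x y * (u y * Q y - u x * Q x) ≤ w x y * (u y - u x) * Q x
  nlinarith [mul_nonneg (mul_nonneg h1 h3) (sub_nonneg.mpr h2)]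

lemma hasDerivAt_lapl (N : V → Finset V) (w : V → V → ℝ) (μ : V → ℝ)
    (f : V → ℝ → ℝ) (f' : V → ℝ) (t : ℝ)
    (h : ∀ y, HasDerivAt (fun s => f y s) (f' y) t) (x : V) :
    HasDerivAt (fun s => lapl N w μ (fun y => f y s) x) (lapl N w μ f' x) t := by
  simp only [lapl]
  exact (HasDerivAt.fun_sum (fun y _ => (((h y).sub (h x)).const_mul (w x y)))).const_mul _

lemma hasDerivAt_gam (N : V → Finset V) (w : V → V → ℝ) (μ : V → ℝ)
    (f : V → ℝ → ℝ) (f' : V → ℝ) (t : ℝ)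
    (h : ∀ y, HasDerivAt (fun s => f y s) (f' y) t) (x : V) :
    HasDerivAt (fun s => gam N w μ (fun y => f y s) (fun y => f y s) x)
      (2 * gam N w μ (fun y => f y t) f' x) t := by
  have H : HasDerivAt (fun s => gam N w μ (fun y => f y s) (fun y => f y s) x)
      ((1 / (2 * μ x)) * ∑ y ∈ N x,
        (w x y * (f' y - f' x) * (f y t - f x t)
          + w x y * (f y t - f x t) * (f' y - f' x))) t := by
    simp only [gam]
    exact (HasDerivAt.fun_sum (fun y _ =>
      ((((h y).sub (h x)).const_mul (w x y)).mul ((h y).sub (h x))))).const_mul _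
  have hD : 2 * gam N w μ (fun y => f y t) f' x
      = (1 / (2 * μ x)) * ∑ y ∈ N x,
        (w x y * (f' y - f' x) * (f y t - f x t)
          + w x y * (f y t - f x t) * (f' y - f' x)) := by
    unfold gam
    rw [Finset.sum_congr rfl (fun y _ => show
      w x y * (f' y - f' x) * (f y t - f x t) + w x y * (f y t - f x t) * (f' y - f' x)
        = 2 * (w x y * (f y t - f x t) * (f' y - f' x)) by ring), ← Finset.mul_sum]
    ring
  rw [hD]; exact H

lemma integral_Ioc_nonneg {f : ℝ → ℝ} {t : ℝ} (ht : 0 ≤ t)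
    (h : ∀ s ∈ Set.Ioc (0:ℝ) t, 0 ≤ f s) :
    0 ≤ ∫ s in (0:ℝ)..t, f s := by
  rw [intervalIntegral.integral_of_le ht]
  exact MeasureTheory.setIntegral_nonneg measurableSet_Ioc h


lemma liYau_Dneg {n K b Av Bv U sU G LU D PFv : ℝ}
    (hn : 0 < n) (hK : 0 ≤ K) (hb : 0 < b) (hAv : 0 ≤ Av) (hBv : 0 ≤ Bv)
    (hU : 0 < U) (hsU : 0 < sU) (hG : 0 ≤ G)
    (hLU : LU = 2*sU*D + 2*G)
    (hPexp : PFv = b*G - (b + 2*K*Av)/2*LU - n/2*(K*b + K^2*Av + Bv/4)*U)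
    (hPpos : 0 < PFv) : D < 0 := by
  by_contra h
  push_neg at h
  have e1 : (b + 2*K*Av)/2*LU = (b + 2*K*Av)/2*(2*sU*D + 2*G) := by rw [hLU]
  nlinarith [e1, mul_nonneg (mul_nonneg hK hAv) hG,
    mul_nonneg (mul_nonneg (by positivity : (0:ℝ) ≤ b + 2*K*Av) hsU.le) h,
    mul_nonneg (by positivity : (0:ℝ) ≤ n/2*(K*b + K^2*Av + Bv/4)) hU.le]

set_option maxHeartbeats 2000000 in
lemma liYau_endgame {n K b b' Av Bv U sU G LU D L2 GD LG PFv QFv DPFv laplPv ε : ℝ}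
    (hn : 0 < n) (hK : 0 ≤ K) (hb : 0 < b) (hb' : 0 < b') (hAv : 0 ≤ Av) (hBv : 0 ≤ Bv)
    (hU : 0 < U) (hsU : 0 < sU) (hsUU : sU * sU = U) (hG : 0 ≤ G) (hε : 0 < ε)
    (hLU : LU = 2*sU*D + 2*G)
    (hPexp : PFv = b*G - (b + 2*K*Av)/2*LU - n/2*(K*b + K^2*Av + Bv/4)*U)
    (hPQ : PFv = QFv * U)
    (hDPF : DPFv = (b'*G + b*(2*GD))
      - ((b' + 2*K*b)/2*LU + (b + 2*K*Av)/2*L2)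
      - (n/2*(K*b' + K^2*b + (b'^2/b)/4)*U + n/2*(K*b + K^2*Av + Bv/4)*LU))
    (hlaplP : laplPv ≤ QFv * LU)
    (hlaplPexp : laplPv = b*LG - (b + 2*K*Av)/2*L2 - n/2*(K*b + K^2*Av + Bv/4)*LU)
    (hder : ε*U^2 ≤ DPFv*U - PFv*LU)
    (hcde : 1/n*D^2 - K*G ≤ 1/2*LG - GD) : False := by
  have hQLU : PFv*LU = QFv*U*LU := by rw [hPQ]
  have S1 : ε*U + QFv*LU ≤ DPFv := by
    have h1 : (ε*U + QFv*LU)*U ≤ DPFv*U := by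
      have e0 : (ε*U + QFv*LU)*U = ε*U^2 + QFv*U*LU := by ring
      rw [e0]
      linarith
    exact le_of_mul_le_mul_right h1 hU
  have S2 : laplPv - DPFv ≤ -(ε*U) := by linarith
  have S4 : 2*b*(1/n*D^2 - K*G) ≤ 2*b*(1/2*LG - GD) :=
    mul_le_mul_of_nonneg_left hcde (by positivity)
  have e1 : (b' + 2*K*b)/2*LU = (b' + 2*K*b)/2*(2*sU*D + 2*G) := by rw [hLU]
  have e2 : n/2*(K*b' + K^2*b + (b'^2/b)/4)*U
      = n/2*(K*b' + K^2*b + (b'^2/b)/4)*(sU*sU) := by rw [hsUU]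
  have S5 : 2*b*(1/n*D^2 - K*G) - b'*G + (b' + 2*K*b)/2*(2*sU*D + 2*G)
      + n/2*(K*b' + K^2*b + (b'^2/b)/4)*(sU*sU) ≤ -(ε*U) := by linarith
  have h8 : (0:ℝ) ≤ 8*n*b := by positivity
  have h9 := mul_le_mul_of_nonneg_left S5 h8
  have e3 : 8*n*b*(2*b*(1/n*D^2 - K*G) - b'*G + (b' + 2*K*b)/2*(2*sU*D + 2*G)
      + n/2*(K*b' + K^2*b + (b'^2/b)/4)*(sU*sU))
      = 16*b^2*D^2 + 8*n*b*((b' + 2*K*b)*(sU*D)) + n^2*(b' + 2*K*b)^2*(sU*sU) := by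
    field_simp
    ring
  have hX : 16*b^2*D^2 + 8*n*b*((b' + 2*K*b)*(sU*D)) + n^2*(b' + 2*K*b)^2*(sU*sU)
      ≤ 8*n*b*(-(ε*U)) := by linarith
  nlinarith [hX, sq_nonneg (4*b*D + n*(b'+2*K*b)*sU), mul_pos (mul_pos hn hb) (mul_pos hε hU)]


lemma liYau_final {n K b Av Bv U sU G LU : ℝ}
    (hn : 0 < n) (hK : 0 ≤ K) (hb : 0 < b) (hU : 0 < U) (hsU : 0 < sU)
    (hsUU : sU*sU = U)
    (hP : b*G - (b + 2*K*Av)/2*LU - n/2*(K*b + K^2*Av + Bv/4)*U ≤ 0) :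
    G/U - (1 + 2*K/b*Av)*(LU/(2*sU))/sU ≤ (n*K + n*K^2/b*Av + n/(4*b)*Bv)/2 := by
  have key : G/U - (1 + 2*K/b*Av)*(LU/(2*sU))/sU - (n*K + n*K^2/b*Av + n/(4*b)*Bv)/2
      = (b*G - (b + 2*K*Av)/2*LU - n/2*(K*b + K^2*Av + Bv/4)*U)/(b*U) := by
    rw [← hsUU]
    field_simp
  have h2 : (b*G - (b + 2*K*Av)/2*LU - n/2*(K*b + K^2*Av + Bv/4)*U)/(b*U) ≤ 0 :=
    div_nonpos_of_nonpos_of_nonneg hP (by positivity)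
  linarith [key, h2]

/-- The primitive of `a`. -/
noncomputable def AA (a : ℝ → ℝ) (t : ℝ) : ℝ := ∫ s in (0:ℝ)..t, a s

/-- The primitive of `a'^2/a`. -/
noncomputable def BB (a a' : ℝ → ℝ) (t : ℝ) : ℝ := ∫ s in (0:ℝ)..t, (a' s)^2 / a s

/-- The main Harnack-type quantity, multiplied by `u` and `a`. -/
noncomputable def PF (N : V → Finset V) (w : V → V → ℝ) (μ : V → ℝ)
    (u : V → ℝ → ℝ) (a a' : ℝ → ℝ) (K n : ℝ) (y : V) (s : ℝ) : ℝ :=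
  a s * gam N w μ (fun z => Real.sqrt (u z s)) (fun z => Real.sqrt (u z s)) y
    - (a s + 2*K*AA a s)/2 * lapl N w μ (fun z => u z s) y
    - n/2 * (K * a s + K^2 * AA a s + BB a a' s/4) * u y s

/-- `PF` divided by `u`. -/
noncomputable def QF (N : V → Finset V) (w : V → V → ℝ) (μ : V → ℝ)
    (u : V → ℝ → ℝ) (a a' : ℝ → ℝ) (K n : ℝ) (y : V) (s : ℝ) : ℝ :=
  PF N w μ u a a' K n y s / u y s

/-- time-derivative of `PF`. -/
noncomputable def DPF (N : V → Finset V) (w : V → V → ℝ) (μ : V → ℝ)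
    (u : V → ℝ → ℝ) (a a' : ℝ → ℝ) (K n : ℝ) (x : V) (t : ℝ) : ℝ :=
  (a' t * gam N w μ (fun z => Real.sqrt (u z t)) (fun z => Real.sqrt (u z t)) x
    + a t * (2 * gam N w μ (fun z => Real.sqrt (u z t))
        (fun y => lapl N w μ (fun z => u z t) y / (2 * Real.sqrt (u y t))) x))
  - ((a' t + 2*K*a t)/2 * lapl N w μ (fun z => u z t) x
      + (a t + 2*K*AA a t)/2 * lapl N w μ (fun y => lapl N w μ (fun z => u z t) y) x)
  - (n/2 * (K * a' t + K^2 * a t + ((a' t)^2 / a t)/4) * u x t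
      + n/2 * (K * a t + K^2 * AA a t + BB a a' t/4) * lapl N w μ (fun z => u z t) x)

theorem li_yau_gradient_estimate [Fintype V]
    (N : V → Finset V) (w : V → V → ℝ) (μ : V → ℝ)
    (hμ : ∀ x, 0 < μ x) (hw : ∀ x y, y ∈ N x → 0 < w x y)
    (n K : ℝ) (hn : 0 < n) (hK : 0 ≤ K)
    (hCDE : ∀ (x : V) (f : V → ℝ), (∀ y, 0 < f y) → lapl N w μ f x < 0 →
      (1 / n) * (lapl N w μ f x) ^ 2 - K * gam N w μ f f x ≤ gam2 N w μ f x)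
    (u : V → ℝ → ℝ) (hu : ∀ x t, 0 < u x t)
    (hheat : ∀ x t, HasDerivAt (u x) (lapl N w μ (fun y => u y t) x) t)
    (a a' : ℝ → ℝ)
    (hderiv : ∀ t > (0:ℝ), HasDerivAt a (a' t) t)
    (ha1 : ∀ t > (0:ℝ), 0 < a t) (ha1' : ∀ t > (0:ℝ), 0 < a' t)
    (ha0 : Filter.Tendsto a (nhdsWithin 0 (Set.Ioi 0)) (nhds 0))
    (ha0' : Filter.Tendsto (fun t => a t / a' t) (nhdsWithin 0 (Set.Ioi 0)) (nhds 0))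
    (ha2 : ∀ L > (0:ℝ), IntervalIntegrable a MeasureTheory.volume 0 L ∧
      IntervalIntegrable (fun s => (a' s) ^ 2 / a s) MeasureTheory.volume 0 L ∧
      ContinuousOn (fun s => (a' s) ^ 2 / a s) (Set.Icc 0 L))
    (α φ : ℝ → ℝ)
    (hα : ∀ t, α t = 1 + (2 * K / a t) * ∫ s in (0:ℝ)..t, a s)
    (hφ : ∀ t, φ t = n * K + (n * K ^ 2 / a t) * (∫ s in (0:ℝ)..t, a s)
        + (n / (4 * a t)) * ∫ s in (0:ℝ)..t, (a' s) ^ 2 / a s) :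
    ∀ x, ∀ t > (0:ℝ),
      gam N w μ (fun y => Real.sqrt (u y t)) (fun y => Real.sqrt (u y t)) x / u x t
          - α t * (deriv (fun s => Real.sqrt (u x s)) t) / Real.sqrt (u x t)
        ≤ φ t / 2 := by
  -- basic positivity facts
  have hune : ∀ y s, u y s ≠ 0 := fun y s => ne_of_gt (hu y s)
  have hsq : ∀ y s, 0 < Real.sqrt (u y s) := fun y s => Real.sqrt_pos.mpr (hu y s)
  have hwnn : ∀ x, ∀ y ∈ N x, 0 ≤ w x y := fun x y hy => (hw x y hy).le
  have hucont : ∀ y, Continuous (u y) :=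
    fun y => continuous_iff_continuousAt.mpr (fun s => (hheat y s).continuousAt)
  -- notation for the heat equation
  have hheat' : ∀ x t, HasDerivAt (fun s => u x s) (lapl N w μ (fun z => u z t) x) t :=
    fun x t => hheat x t
  -- monotonicity of a
  have hacont : ContinuousOn a (Set.Ioi (0:ℝ)) :=
    fun t ht => ((hderiv t ht).continuousAt).continuousWithinAt
  have amono : MonotoneOn a (Set.Ioi (0:ℝ)) := by
    have : StrictMonoOn a (Set.Ioi (0:ℝ)) := by
      apply strictMonoOn_of_deriv_pos (convex_Ioi 0) hacont
      rw [interior_Ioi]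
      intro s hs
      rw [(hderiv s hs).deriv]
      exact ha1' s hs
    exact this.monotoneOn
  -- integrability
  have haint : ∀ t > (0:ℝ), IntervalIntegrable a volume 0 t := fun t ht => (ha2 t ht).1
  have hbint : ∀ t > (0:ℝ), IntervalIntegrable (fun s => (a' s)^2 / a s) volume 0 t :=
    fun t ht => (ha2 t ht).2.1
  -- derivative of the primitives
  have hA' : ∀ t > (0:ℝ), HasDerivAt (AA a) (a t) t := by
    intro t ht
    exact intervalIntegral.integral_hasDerivAt_right (haint t ht)
      (ContinuousOn.stronglyMeasurableAtFilter isOpen_Ioi hacont t ht)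
      (hderiv t ht).continuousAt
  have hB' : ∀ t > (0:ℝ), HasDerivAt (BB a a') ((a' t)^2 / a t) t := by
    intro t ht
    have hco : ContinuousOn (fun s => (a' s)^2 / a s) (Set.Ioo (0:ℝ) (t+1)) :=
      ((ha2 (t+1) (by linarith)).2.2).mono Set.Ioo_subset_Icc_self
    have hmem : t ∈ Set.Ioo (0:ℝ) (t+1) := ⟨ht, by linarith⟩
    exact intervalIntegral.integral_hasDerivAt_right (hbint t ht)
      (ContinuousOn.stronglyMeasurableAtFilter isOpen_Ioo hco t hmem)
      (hco.continuousAt (IsOpen.mem_nhds isOpen_Ioo hmem))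
  -- nonnegativity of the primitives
  have hAnn : ∀ t > (0:ℝ), 0 ≤ AA a t := by
    intro t ht
    exact integral_Ioc_nonneg ht.le (fun s hs => (ha1 s hs.1).le)
  have hBnn : ∀ t > (0:ℝ), 0 ≤ BB a a' t := by
    intro t ht
    exact integral_Ioc_nonneg ht.le
      (fun s hs => div_nonneg (sq_nonneg _) (ha1 s hs.1).le)
  -- limits of the primitives at 0+
  have hAlim : Filter.Tendsto (AA a) (nhdsWithin 0 (Set.Ioi 0)) (nhds 0) := by
    have hup : Filter.Tendsto (fun t => a 1 * t) (nhdsWithin 0 (Set.Ioi 0)) (nhds 0) := by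
      have h0 : Filter.Tendsto (fun t : ℝ => a 1 * t) (nhds 0) (nhds (a 1 * 0)) :=
        (continuous_const.mul continuous_id).tendsto 0
      simpa using h0.mono_left nhdsWithin_le_nhds
    refine tendsto_of_tendsto_of_tendsto_of_le_of_le' (h := fun t => a 1 * t)
      tendsto_const_nhds hup ?_ ?_
    · filter_upwards [Ioc_mem_nhdsGT one_pos] with t ht
      exact hAnn t ht.1
    · filter_upwards [Ioc_mem_nhdsGT one_pos] with t ht
      have hint := haint t ht.1
      have h1 : (0:ℝ) ≤ ∫ s in (0:ℝ)..t, (a 1 - a s) := by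
        apply integral_Ioc_nonneg ht.1.le
        intro s hs
        have := amono (Set.mem_Ioi.mpr hs.1) (Set.mem_Ioi.mpr one_pos) (hs.2.trans ht.2)
        linarith
      have h2 : ∫ s in (0:ℝ)..t, (a 1 - a s) = a 1 * t - AA a t := by
        rw [intervalIntegral.integral_sub intervalIntegrable_const hint,
          intervalIntegral.integral_const]
        simp [AA, smul_eq_mul]
        ring
      rw [h2] at h1
      linarith
  have hBlim : Filter.Tendsto (BB a a') (nhdsWithin 0 (Set.Ioi 0)) (nhds 0) := by
    obtain ⟨M, hM⟩ := (isCompact_Icc (a := (0:ℝ)) (b := 1)).exists_bound_of_continuousOn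
      (ha2 1 one_pos).2.2
    have hup : Filter.Tendsto (fun t => M * t) (nhdsWithin 0 (Set.Ioi 0)) (nhds 0) := by
      have h0 : Filter.Tendsto (fun t : ℝ => M * t) (nhds 0) (nhds (M * 0)) :=
        (continuous_const.mul continuous_id).tendsto 0
      simpa using h0.mono_left nhdsWithin_le_nhds
    refine tendsto_of_tendsto_of_tendsto_of_le_of_le' (h := fun t => M * t)
      tendsto_const_nhds hup ?_ ?_
    · filter_upwards [Ioc_mem_nhdsGT one_pos] with t ht
      exact hBnn t ht.1
    · filter_upwards [Ioc_mem_nhdsGT one_pos] with t ht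
      have hint := hbint t ht.1
      have h1 : (0:ℝ) ≤ ∫ s in (0:ℝ)..t, (M - (a' s)^2 / a s) := by
        apply integral_Ioc_nonneg ht.1.le
        intro s hs
        have := hM s ⟨hs.1.le, hs.2.trans ht.2⟩
        have h3 : (a' s)^2 / a s ≤ M := by
          have h4 : (a' s)^2 / a s ≤ |(a' s)^2 / a s| := le_abs_self _
          rw [Real.norm_eq_abs] at this
          linarith
        linarith
      have h2 : ∫ s in (0:ℝ)..t, (M - (a' s)^2 / a s) = M * t - BB a a' t := by
        rw [intervalIntegral.integral_sub intervalIntegrable_const hint,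
          intervalIntegral.integral_const]
        simp [BB, smul_eq_mul]
        ring
      rw [h2] at h1
      linarith
  -- derivatives of the building blocks
  have hgf' : ∀ y t, HasDerivAt (fun s => Real.sqrt (u y s))
      (lapl N w μ (fun z => u z t) y / (2 * Real.sqrt (u y t))) t :=
    fun y t => (hheat y t).sqrt (hune y t)
  have hLu' : ∀ x t, HasDerivAt (fun s => lapl N w μ (fun z => u z s) x)
      (lapl N w μ (fun y => lapl N w μ (fun z => u z t) y) x) t :=
    fun x t => hasDerivAt_lapl N w μ u (fun y => lapl N w μ (fun z => u z t) y) t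
      (fun y => hheat y t) x
  have hGm' : ∀ x t, HasDerivAt
      (fun s => gam N w μ (fun z => Real.sqrt (u z s)) (fun z => Real.sqrt (u z s)) x)
      (2 * gam N w μ (fun z => Real.sqrt (u z t))
        (fun y => lapl N w μ (fun z => u z t) y / (2 * Real.sqrt (u y t))) x) t :=
    fun x t => hasDerivAt_gam N w μ (fun y s => Real.sqrt (u y s))
      (fun y => lapl N w μ (fun z => u z t) y / (2 * Real.sqrt (u y t))) t
      (fun y => hgf' y t) x
  -- derivative of P in time
  have hP' : ∀ x, ∀ t > (0:ℝ), HasDerivAt (fun s => PF N w μ u a a' K n x s)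
      (DPF N w μ u a a' K n x t) t := by
    intro x t ht
    have h1 := (hderiv t ht).mul (hGm' x t)
    have h2 := (((hderiv t ht).add ((hA' t ht).const_mul (2*K))).div_const 2).mul (hLu' x t)
    have h3 := (((((hderiv t ht).const_mul K).add ((hA' t ht).const_mul (K^2))).add
      ((hB' t ht).div_const 4)).const_mul (n/2)).mul (hheat' x t)
    exact (h1.sub h2).sub h3
  -- continuity of building blocks
  have hsqc : ∀ y, Continuous (fun s => Real.sqrt (u y s)) :=
    fun y => Real.continuous_sqrt.comp (hucont y)
  have hLuc : ∀ y, Continuous (fun s => lapl N w μ (fun z => u z s) y) := by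
    intro y
    simp only [lapl]
    exact continuous_const.mul (continuous_finset_sum _ fun z _ =>
      continuous_const.mul ((hucont z).sub (hucont y)))
  have hGmc : ∀ y, Continuous
      (fun s => gam N w μ (fun z => Real.sqrt (u z s)) (fun z => Real.sqrt (u z s)) y) := by
    intro y
    simp only [gam]
    exact continuous_const.mul (continuous_finset_sum _ fun z _ =>
      (continuous_const.mul ((hsqc z).sub (hsqc y))).mul ((hsqc z).sub (hsqc y)))
  -- limit of Q at 0+
  have hQlim : ∀ x, Filter.Tendsto (fun t => QF N w μ u a a' K n x t)
      (nhdsWithin 0 (Set.Ioi 0)) (nhds 0) := by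
    intro x
    have T1 := ha0.mul (((hGmc x).tendsto 0).mono_left
      (nhdsWithin_le_nhds (s := Set.Ioi (0:ℝ))))
    have T2 := ((ha0.add (hAlim.const_mul (2*K))).div_const 2).mul
      (((hLuc x).tendsto 0).mono_left (nhdsWithin_le_nhds (s := Set.Ioi (0:ℝ))))
    have T3 := ((((ha0.const_mul K).add (hAlim.const_mul (K^2))).add
      (hBlim.div_const 4)).const_mul (n/2)).mul
      (((hucont x).tendsto 0).mono_left (nhdsWithin_le_nhds (s := Set.Ioi (0:ℝ))))
    have Tot := ((T1.sub T2).sub T3).div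
      (((hucont x).tendsto 0).mono_left (nhdsWithin_le_nhds (s := Set.Ioi (0:ℝ))))
      (hune x 0)
    simpa [QF, PF, Pi.div_def] using Tot
  -- the key estimate
  have key : ∀ x₀, ∀ T > (0:ℝ), ∀ ε > (0:ℝ), QF N w μ u a a' K n x₀ T - ε * T ≤ 0 := by
    intro x₀ T hT ε hε
    by_contra hcon
    push_neg at hcon
    set m := QF N w μ u a a' K n x₀ T - ε * T with hm
    have hm0 : 0 < m := hcon
    have h1 : ∀ x : V, ∀ᶠ t in nhdsWithin 0 (Set.Ioi 0), QF N w μ u a a' K n x t - ε*t < m := by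
      intro x
      have h3 : Filter.Tendsto (fun t : ℝ => ε*t) (nhdsWithin 0 (Set.Ioi 0)) (nhds (ε*0)) :=
        ((continuous_const.mul continuous_id).tendsto 0).mono_left nhdsWithin_le_nhds
      have h2 : Filter.Tendsto (fun t => QF N w μ u a a' K n x t - ε*t)
          (nhdsWithin 0 (Set.Ioi 0)) (nhds 0) := by
        simpa using (hQlim x).sub h3
      exact h2.eventually (gt_mem_nhds hm0)
    have h4 : ∀ᶠ t in nhdsWithin 0 (Set.Ioi 0),
        (∀ x : V, QF N w μ u a a' K n x t - ε*t < m) ∧ t ∈ Set.Ioo 0 T :=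
      (Filter.eventually_all.mpr h1).and
        (Filter.eventually_of_mem (Ioo_mem_nhdsGT hT) (fun t ht => ht))
    obtain ⟨t₁, ht₁small, ht₁mem⟩ := h4.exists
    have hQco : ∀ x : V, ContinuousOn (fun t => QF N w μ u a a' K n x t - ε*t) (Set.Icc t₁ T) := by
      intro x t ht
      have htpos : 0 < t := lt_of_lt_of_le ht₁mem.1 ht.1
      exact (((hP' x t htpos).continuousAt.div ((hucont x).continuousAt) (hune x t)).sub
        ((continuous_const.mul continuous_id).continuousAt)).continuousWithinAt
    have hne2 : (Set.Icc t₁ T).Nonempty := ⟨t₁, le_refl t₁, ht₁mem.2.le⟩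
    choose tx htx htmax using fun x : V => isCompact_Icc.exists_isMaxOn hne2 (hQco x)
    obtain ⟨xs, _, hxs⟩ := Finset.univ.exists_max_image
      (fun x : V => QF N w μ u a a' K n x (tx x) - ε*(tx x)) ⟨x₀, Finset.mem_univ x₀⟩
    set ts := tx xs with htsdef
    have hglob : ∀ y, ∀ s ∈ Set.Icc t₁ T, QF N w μ u a a' K n y s - ε*s ≤ QF N w μ u a a' K n xs ts - ε*ts := by
      intro y s hs
      exact le_trans (htmax y hs) (hxs y (Finset.mem_univ y))
    have hmle : m ≤ QF N w μ u a a' K n xs ts - ε*ts := by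
      rw [hm]
      exact hglob x₀ T ⟨ht₁mem.2.le, le_refl T⟩
    have htsIcc := htx xs
    have hts1 : t₁ < ts := by
      rcases lt_or_eq_of_le htsIcc.1 with h | h
      · exact h
      · exfalso
        have h5 := ht₁small xs
        rw [h] at h5
        linarith
    have htspos : 0 < ts := lt_trans ht₁mem.1 hts1
    have htsT : ts ≤ T := htsIcc.2
    have hQs : 0 < QF N w μ u a a' K n xs ts := by
      have h6 := mul_pos hε htspos
      linarith
    have hsp : ∀ y, QF N w μ u a a' K n y ts ≤ QF N w μ u a a' K n xs ts := by
      intro y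
      have h7 := hglob y ts ⟨hts1.le, htsT⟩
      linarith
    -- temporal derivative bound at the max point
    have hQd := (hP' xs ts htspos).div (hheat' xs ts) (hune xs ts)
    have hd2 : HasDerivAt (fun s => QF N w μ u a a' K n xs s - ε*s)
        ((DPF N w μ u a a' K n xs ts * u xs ts - PF N w μ u a a' K n xs ts * lapl N w μ (fun z => u z ts) xs) / (u xs ts)^2 - ε) ts := by
      have h5 : HasDerivAt (fun s : ℝ => ε*s) ε ts := by
        simpa using (hasDerivAt_id ts).const_mul ε
      exact hQd.sub h5
    have hder0 : 0 ≤ (DPF N w μ u a a' K n xs ts * u xs ts - PF N w μ u a a' K n xs ts * lapl N w μ (fun z => u z ts) xs) / (u xs ts)^2 - ε :=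
      deriv_nonneg_at_max hts1 hd2 (fun s hs => by
        have h8 := hglob xs s ⟨hs.1, le_trans hs.2 htsT⟩
        linarith)
    have hder : ε * (u xs ts)^2 ≤ DPF N w μ u a a' K n xs ts * u xs ts - PF N w μ u a a' K n xs ts * lapl N w μ (fun z => u z ts) xs := by
      have h6 : ε ≤ (DPF N w μ u a a' K n xs ts * u xs ts - PF N w μ u a a' K n xs ts * lapl N w μ (fun z => u z ts) xs) / (u xs ts)^2 := by
        linarith
      exact (le_div_iff₀ (pow_pos (hu xs ts) 2)).mp h6
    -- structural relations at the max point
    have hLUeq : lapl N w μ (fun z => u z ts) xs = 2*Real.sqrt (u xs ts)*(lapl N w μ (fun z => Real.sqrt (u z ts)) xs) + 2*gam N w μ (fun z => Real.sqrt (u z ts)) (fun z => Real.sqrt (u z ts)) xs := by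
      have e1 : (fun z => u z ts) = (fun z => Real.sqrt (u z ts)^2) :=
        funext fun z => (Real.sq_sqrt (hu z ts).le).symm
      rw [e1]
      exact lapl_sq N w μ _ xs (ne_of_gt (hμ xs))
    have hPexp : PF N w μ u a a' K n xs ts = a ts * gam N w μ (fun z => Real.sqrt (u z ts)) (fun z => Real.sqrt (u z ts)) xs
        - (a ts + 2*K*AA a ts)/2 * lapl N w μ (fun z => u z ts) xs
        - n/2*(K*a ts + K^2*AA a ts + BB a a' ts/4) * u xs ts := rfl
    have hPQ : PF N w μ u a a' K n xs ts = QF N w μ u a a' K n xs ts * u xs ts := (div_mul_cancel₀ _ (hune xs ts)).symm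
    have hPpos : 0 < PF N w μ u a a' K n xs ts := by
      rw [hPQ]
      exact mul_pos hQs (hu xs ts)
    have hDneg : lapl N w μ (fun z => Real.sqrt (u z ts)) xs < 0 :=
      liYau_Dneg hn hK (ha1 ts htspos) (hAnn ts htspos) (hBnn ts htspos) (hu xs ts)
        (hsq xs ts) (gam_nonneg N w μ _ xs (hμ xs) (hwnn xs)) hLUeq hPexp hPpos
    have hcde0 := hCDE xs (fun z => Real.sqrt (u z ts)) (fun z => hsq z ts) hDneg
    have hg2 : gam2 N w μ (fun z => Real.sqrt (u z ts)) xs = (1/2) * lapl N w μ (fun y => gam N w μ (fun z => Real.sqrt (u z ts)) (fun z => Real.sqrt (u z ts)) y) xs - gam N w μ (fun z => Real.sqrt (u z ts)) (fun y => lapl N w μ (fun z => u z ts) y / (2 * Real.sqrt (u y ts))) xs := by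
      unfold gam2
      have e2 : (fun z => Real.sqrt (u z ts) ^ 2) = (fun z => u z ts) :=
        funext fun z => Real.sq_sqrt (hu z ts).le
      rw [e2]
    rw [hg2] at hcde0
    have hlaplPle : lapl N w μ (fun y => PF N w μ u a a' K n y ts) xs ≤ QF N w μ u a a' K n xs ts * lapl N w μ (fun z => u z ts) xs := by
      have e3 : (fun y => PF N w μ u a a' K n y ts) = (fun y => u y ts * QF N w μ u a a' K n y ts) := funext fun y => by
        simp only [QF]
        rw [mul_comm, div_mul_cancel₀ _ (hune y ts)]
      rw [e3]
      exact lapl_mul_le N w μ _ _ xs (hμ xs) (hwnn xs) (fun y => hu y ts) hsp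
    have hlaplPexp : lapl N w μ (fun y => PF N w μ u a a' K n y ts) xs
        = a ts * lapl N w μ (fun y => gam N w μ (fun z => Real.sqrt (u z ts)) (fun z => Real.sqrt (u z ts)) y) xs
          - (a ts + 2*K*AA a ts)/2 * lapl N w μ (fun y => lapl N w μ (fun z => u z ts) y) xs
          - n/2*(K*a ts + K^2*AA a ts + BB a a' ts/4) * lapl N w μ (fun z => u z ts) xs := by
      have e4 : (fun y => PF N w μ u a a' K n y ts)
          = (fun y => (a ts) * gam N w μ (fun z => Real.sqrt (u z ts)) (fun z => Real.sqrt (u z ts)) y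
              + (-((a ts + 2*K*AA a ts)/2)) * lapl N w μ (fun z => u z ts) y
              + (-(n/2*(K*a ts + K^2*AA a ts + BB a a' ts/4))) * u y ts) := by
        funext y
        simp only [PF]
        ring
      rw [e4, lapl_lin]
      ring
    have hDPFexp : DPF N w μ u a a' K n xs ts = (a' ts * gam N w μ (fun z => Real.sqrt (u z ts)) (fun z => Real.sqrt (u z ts)) xs + a ts * (2*gam N w μ (fun z => Real.sqrt (u z ts)) (fun y => lapl N w μ (fun z => u z ts) y / (2 * Real.sqrt (u y ts))) xs))
        - ((a' ts + 2*K*a ts)/2*lapl N w μ (fun z => u z ts) xs + (a ts + 2*K*AA a ts)/2*lapl N w μ (fun y => lapl N w μ (fun z => u z ts) y) xs)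
        - (n/2*(K*a' ts + K^2*a ts + ((a' ts)^2/a ts)/4)*u xs ts
            + n/2*(K*a ts + K^2*AA a ts + BB a a' ts/4)*lapl N w μ (fun z => u z ts) xs) := rfl
    exact liYau_endgame hn hK (ha1 ts htspos) (ha1' ts htspos) (hAnn ts htspos)
      (hBnn ts htspos) (hu xs ts) (hsq xs ts) (Real.mul_self_sqrt (hu xs ts).le)
      (gam_nonneg N w μ _ xs (hμ xs) (hwnn xs)) hε hLUeq hPexp hPQ hDPFexp
      hlaplPle hlaplPexp hder hcde0
  -- conclusion
  have hQ0 : ∀ x, ∀ t, 0 < t → QF N w μ u a a' K n x t ≤ 0 := by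
    intro x t ht
    by_contra hq
    push_neg at hq
    have h1 := key x t ht (QF N w μ u a a' K n x t/(2*t)) (by positivity)
    have e : QF N w μ u a a' K n x t/(2*t)*t = QF N w μ u a a' K n x t/2 := by
      field_simp
    linarith
  intro x t ht
  have hP0 : PF N w μ u a a' K n x t ≤ 0 := by
    have h1 := hQ0 x t ht
    have hPQ2 : PF N w μ u a a' K n x t = QF N w μ u a a' K n x t * u x t :=
      (div_mul_cancel₀ _ (hune x t)).symm
    nlinarith [mul_nonneg (neg_nonneg.mpr h1) (hu x t).le]
  have hder2 : deriv (fun s => Real.sqrt (u x s)) t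
      = lapl N w μ (fun z => u z t) x / (2*Real.sqrt (u x t)) := (hgf' x t).deriv
  rw [hder2, hα t, hφ t]
  exact liYau_final hn hK (ha1 t ht) (hu x t) (hsq x t)
    (Real.mul_self_sqrt (hu x t).le) hP0
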